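/- arXiv:math/9907020 — 2 statements merged into one kernel-verified Lean document; each statement's English description precedes it below -/
import Mathlib

section
/- If M is an even rank-2 lattice with Gram matrix (a_ij) such that every entry of the adjugate matrix [[2c, -b],[-b, 2a]] is divisible by 11 and det M = -121, then every entry a_ij is divisible by 11, so M = M₁(11) for an even unimodular lattice M₁ of rank 2 and signature (1,1); hence M is isometric to U(11). -/
open Matrix

/-!
Since `11` is odd, `11 ∣ 2a` and `11 ∣ 2c` give `11 ∣ a` and `11 ∣ c`, so the Gram matrix is
`11` times the Gram matrix of an even binary form `a'x² + b'xy + c'y²` of determinant `-1`. Its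
discriminant `b'² - 4a'c' = 1` is a square, so the form is isotropic; a primitive isotropic vector
`v` can be completed, by unimodularity, to a basis `v, w` with `B(v, w) = 1` and `Q(w) = 0`, which
is a hyperbolic basis. Scaling back by `11` turns `U` into `U(11)`.
-/

theorem Matrix.isUnit_det_of_transpose_mul_mul_eq {n R : Type*} [Fintype n] [DecidableEq n]
    [CommRing R] {G H P : Matrix n n R} (h : Pᵀ * G * P = H) (hH : IsUnit H.det) :
    IsUnit P.det := by
  rw [← h, det_mul, det_mul, det_transpose] at hH
  exact isUnit_of_mul_isUnit_right hH

lemma transpose_mul_evenGram_mul (a b c p q r s : ℤ) :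
    (!![p, q; r, s])ᵀ * !![2 * a, b; b, 2 * c] * !![p, q; r, s] =
      !![2 * (a * p ^ 2 + b * p * r + c * r ^ 2),
          2 * a * p * q + b * (p * s + q * r) + 2 * c * r * s;
        2 * a * p * q + b * (p * s + q * r) + 2 * c * r * s,
        2 * (a * q ^ 2 + b * q * s + c * s ^ 2)] := by
  ext i j; fin_cases i <;> fin_cases j <;> simp [mul_apply, Fin.sum_univ_two] <;> ring

lemma exists_isCoprime_isotropic_of_isotropic {a b c x y : ℤ} (hxy : x ≠ 0 ∨ y ≠ 0)
    (h : a * x ^ 2 + b * x * y + c * y ^ 2 = 0) :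
    ∃ p r : ℤ, IsCoprime p r ∧ a * p ^ 2 + b * p * r + c * r ^ 2 = 0 := by
  obtain ⟨g, p, r, hg, hpr, rfl, rfl⟩ := Int.exists_gcd_one' (Int.gcd_pos_iff.mpr hxy)
  refine ⟨p, r, Int.isCoprime_iff_gcd_eq_one.mpr hpr, ?_⟩
  have hg2 : (g : ℤ) ^ 2 ≠ 0 := by positivity
  exact (mul_eq_zero.mp (by linear_combination h : (g : ℤ) ^ 2 * _ = 0)).resolve_left hg2

/-- With `b = 2k + 1`, the vectors `(k, -a)` and `(k + 1, -a)` are isotropic, and one of them is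
nonzero. -/
lemma exists_isCoprime_isotropic {a b c : ℤ} (h : b ^ 2 - 4 * a * c = 1) :
    ∃ p r : ℤ, IsCoprime p r ∧ a * p ^ 2 + b * p * r + c * r ^ 2 = 0 := by
  obtain ⟨k, rfl | rfl⟩ := Int.even_or_odd' b
  · have : 4 * (k ^ 2 - a * c) = 1 := by linear_combination h
    omega
  have hk : k * (k + 1) = a * c := by linarith
  by_cases hk0 : k = 0
  · exact exists_isCoprime_isotropic_of_isotropic (x := k + 1) (y := -a) (by omega)
      (by linear_combination (-a) * hk)
  · exact exists_isCoprime_isotropic_of_isotropic (x := k) (y := -a) (Or.inl hk0)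
      (by linear_combination (-a) * hk)

/-- From a Bézout relation `u p + v r = 1`, the vector `t = (x, y) = G⁻¹ (u, v) = -adj G (u, v)`
pairs to `1` with `(p, r)`; then `t - Q(t) (p, r)` is isotropic and still pairs to `1`. -/
lemma exists_isotropic_polar_eq_one {a b c p r : ℤ} (h : b ^ 2 - 4 * a * c = 1)
    (hpr : IsCoprime p r) (hiso : a * p ^ 2 + b * p * r + c * r ^ 2 = 0) :
    ∃ q s : ℤ, 2 * a * p * q + b * (p * s + q * r) + 2 * c * r * s = 1 ∧
      a * q ^ 2 + b * q * s + c * s ^ 2 = 0 := by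
  obtain ⟨u, v, huv⟩ := hpr
  set x := b * v - 2 * c * u
  set y := b * u - 2 * a * v
  have hpolar : 2 * a * p * x + b * (p * y + x * r) + 2 * c * r * y = 1 := by
    linear_combination (p * u + r * v) * h + huv
  set m := a * x ^ 2 + b * x * y + c * y ^ 2
  refine ⟨x - m * p, y - m * r, ?_, ?_⟩
  · linear_combination hpolar - 2 * m * hiso
  · linear_combination -m * hpolar + m ^ 2 * hiso

lemma exists_isUnit_det_transpose_mul_evenGram_mul_eq_hyperbolic {a b c : ℤ}
    (h : b ^ 2 - 4 * a * c = 1) :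
    ∃ P : Matrix (Fin 2) (Fin 2) ℤ, IsUnit P.det ∧
      Pᵀ * !![2 * a, b; b, 2 * c] * P = !![0, 1; 1, 0] := by
  obtain ⟨p, r, hpr, hiso⟩ := exists_isCoprime_isotropic h
  obtain ⟨q, s, hpolar, hiso'⟩ := exists_isotropic_polar_eq_one h hpr hiso
  have hP : (!![p, q; r, s])ᵀ * !![2 * a, b; b, 2 * c] * !![p, q; r, s] = !![0, 1; 1, 0] := by
    rw [transpose_mul_evenGram_mul, hiso, hiso', hpolar, mul_zero]
  exact ⟨_, isUnit_det_of_transpose_mul_mul_eq hP (by simp [det_fin_two_of]), hP⟩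

/-- If the Gram matrix `[[2a,b],[b,2c]]` of an even rank-2 lattice has adjugate
entries `2c, -b, -b, 2a` all divisible by `11` and determinant `-121`, then all
entries are divisible by `11`, `M = M₁(11)` for an even unimodular `M₁`, and `M`
is isometric to `U(11)`. -/
theorem even_rank_two_eleven_elementary (a b c : ℤ)
    (hadj : (11 : ℤ) ∣ 2 * c ∧ (11 : ℤ) ∣ -b ∧ (11 : ℤ) ∣ 2 * a)
    (hdet : (2 * a) * (2 * c) - b ^ 2 = -121) :
    ((11 : ℤ) ∣ 2 * a ∧ (11 : ℤ) ∣ b ∧ (11 : ℤ) ∣ 2 * c) ∧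
    (∃ a' b' c' : ℤ, a = 11 * a' ∧ b = 11 * b' ∧ c = 11 * c' ∧
      (2 * a') * (2 * c') - b' ^ 2 = -1) ∧
    (∃ P : Matrix (Fin 2) (Fin 2) ℤ, IsUnit P.det ∧
      Pᵀ * !![2 * a, b; b, 2 * c] * P = !![0, 11; 11, 0]) := by
  obtain ⟨h2c, hb, h2a⟩ := hadj
  obtain ⟨a', rfl⟩ : (11 : ℤ) ∣ a := by omega
  obtain ⟨b', rfl⟩ : (11 : ℤ) ∣ b := by omega
  obtain ⟨c', rfl⟩ : (11 : ℤ) ∣ c := by omega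
  have hunimod : (2 * a') * (2 * c') - b' ^ 2 = -1 := by linarith
  refine ⟨⟨h2a, dvd_mul_right 11 b', h2c⟩, ⟨a', b', c', rfl, rfl, rfl, hunimod⟩, ?_⟩
  obtain ⟨P, hP, hPG⟩ := exists_isUnit_det_transpose_mul_evenGram_mul_eq_hyperbolic
    (a := a') (b := b') (c := c') (by linear_combination -hunimod)
  have hscale : !![2 * (11 * a'), 11 * b'; 11 * b', 2 * (11 * c')] =
      (11 : ℤ) • !![2 * a', b'; b', 2 * c'] := by
    simp only [smul_of, smul_cons, smul_empty, smul_eq_mul]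
    ring_nf
  refine ⟨P, hP, ?_⟩
  rw [hscale, Matrix.mul_smul, smul_mul, hPG]
  simp only [smul_of, smul_cons, smul_empty, smul_eq_mul, mul_zero, mul_one]
end

section
/- Let a(t), b(t) be polynomials with deg a ≤ 8, deg b ≤ 12, satisfying 4a(t)³ + 27b(t)² = δ(t¹¹ − α¹¹)(t¹¹ − 1) for some nonzero constant δ, and suppose a(t) = A t^m and b(t) = t^n(B₁ + B₂t¹¹) with n ≤ 1 when B₂ ≠ 0. Then m = n = 0, i.e., a(t) = A and b(t) = B₁ + B₂t¹¹. -/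
open Polynomial

/-- If `a(t) = A tᵐ`, `b(t) = tⁿ(B₁ + B₂ t¹¹)` (with `A, B₂ ≠ 0`, `deg a ≤ 8`,
`deg b ≤ 12`, and `n ≤ 1`) satisfy
`4a³ + 27b² = δ(t¹¹ - α¹¹)(t¹¹ - 1)` with `δ ≠ 0`, `α ≠ 0`, `α¹¹ ≠ 1`,
then `m = n = 0`, i.e. `a = A` and `b = B₁ + B₂ t¹¹`. -/
theorem weierstrass_coefficients_constant (A B₁ B₂ δ α : ℂ)
    (hA : A ≠ 0) (hB₂ : B₂ ≠ 0) (hδ : δ ≠ 0) (hα : α ≠ 0) (hα11 : α ^ 11 ≠ 1)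
    (m n : ℕ) (hm : m ≤ 8) (hn : n ≤ 1)
    (a b : Polynomial ℂ)
    (ha : a = C A * X ^ m) (hb : b = X ^ n * (C B₁ + C B₂ * X ^ 11))
    (hdega : a.degree ≤ 8) (hdegb : b.degree ≤ 12)
    (heq : 4 * a ^ 3 + 27 * b ^ 2 = C δ * ((X ^ 11 - C (α ^ 11)) * (X ^ 11 - 1))) :
    m = 0 ∧ n = 0 ∧ a = C A ∧ b = C B₁ + C B₂ * X ^ 11 := by
  subst ha hb
  obtain ⟨γ, hγ⟩ : ∃ γ, γ = α ^ 11 := ⟨_, rfl⟩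
  rw [← hγ] at heq hα11
  have hγ0 : γ ≠ 0 := hγ ▸ pow_ne_zero _ hα
  have key : C (4*A^3) * X^(3*m) + C (27*B₁^2) * X^(2*n) + C (54*(B₁*B₂)) * X^(2*n+11)
      + C (27*B₂^2) * X^(2*n+22)
      = C δ * X^22 - C (δ*(γ+1)) * X^11 + C (δ*γ) := by
    simp only [map_mul, map_pow, map_add, map_ofNat, map_one]
    linear_combination heq
  have hn0 : n = 0 := by
    interval_cases n
    · rfl
    · exfalso
      rcases eq_or_ne m 8 with rfl | hm8
      · have h := congrArg (fun p => Polynomial.coeff p 0) key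
        simp only [coeff_add, coeff_sub, coeff_C_mul, coeff_X_pow, coeff_C] at h
        norm_num at h
        exact hδ (by simpa [hγ0] using h.symm)
      · have h := congrArg (fun p => Polynomial.coeff p 24) key
        simp only [coeff_add, coeff_sub, coeff_C_mul, coeff_X_pow, coeff_C] at h
        norm_num [show ¬(24 = 3*m) from by omega] at h
        exact hB₂ (by simpa using h)
  subst hn0
  have hm0 : m = 0 := by
    by_contra hmne
    have h := congrArg (fun p => Polynomial.coeff p (3*m)) key
    simp only [coeff_add, coeff_sub, coeff_C_mul, coeff_X_pow, coeff_C] at h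
    norm_num [show ¬(3*m = 0) from by omega, show ¬(3*m = 11) from by omega,
      show ¬(3*m = 22) from by omega] at h
    exact hA (by simpa using h)
  subst hm0
  refine ⟨rfl, rfl, by simp, by ring⟩
end
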